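/- Let G = (V,E) be a finite simple graph, let A ∈ 𝒜_G be a generalized adjacency matrix of G, and let w ∈ ℝ₊^V..For every y ∈ ℝ^V satisfying Π_w (I+Â)^{1/2} y ≥ √w (where Π_w is the diagonal orthogonal projector onto the coordinates in the support of w and √w is the componentwise square root), the rank-one matrix yyᵀ is positive semidefinite, satisfies diag((I+Â)^{1/2} yyᵀ (I+Â)^{1/2}) ≥ w, and tr(yyᵀ) = ‖y‖₂². Consequently, Υ(A,w) ≤ ℓ(A,w), where ℓ(A,w) ∈ ℝ ∪ {+∞} is the Luz bound. -/

import Mathlib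

open scoped BigOperators Pointwise

variable {V : Type*} [Fintype V] [DecidableEq V]

/-- Inner product on `ℝ^V`. -/
def ip (w z : V → ℝ) : ℝ := ∑ i, w i * z i

/-- `κ` is a positive definite monotone gauge on the nonnegative orthant of `ℝ^V`. -/
def IsPDMGauge (κ : (V → ℝ) → ℝ) : Prop :=
  κ 0 = 0 ∧
  (∀ w : V → ℝ, 0 ≤ w → 0 ≤ κ w) ∧
  (∀ (c : ℝ) (w : V → ℝ), 0 < c → 0 ≤ w → κ (c • w) = c * κ w) ∧
  (∀ w z : V → ℝ, 0 ≤ w → 0 ≤ z → κ (w + z) ≤ κ w + κ z) ∧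
  (∀ w : V → ℝ, 0 ≤ w → w ≠ 0 → 0 < κ w) ∧
  (∀ w z : V → ℝ, 0 ≤ w → w ≤ z → κ w ≤ κ z)

/-- The dual gauge `κ∘(z) = sup{⟨w,z⟩ : w ≥ 0, κ(w) ≤ 1}`. -/
noncomputable def dualGauge (κ : (V → ℝ) → ℝ) (z : V → ℝ) : ℝ :=
  sSup {r : ℝ | ∃ w : V → ℝ, 0 ≤ w ∧ κ w ≤ 1 ∧ r = ip w z}

/-- The antiblocker of a subset of the nonnegative orthant. -/
def abl (X : Set (V → ℝ)) : Set (V → ℝ) := {y | 0 ≤ y ∧ ∀ x ∈ X, ip x y ≤ 1}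

/-- A convex corner: compact, convex, nonempty interior, subset of the nonnegative
orthant, and lower-comprehensive. -/
def IsConvexCorner (C : Set (V → ℝ)) : Prop :=
  IsCompact C ∧ Convex ℝ C ∧ (interior C).Nonempty ∧ (∀ x ∈ C, 0 ≤ x) ∧
  ∀ x y : V → ℝ, 0 ≤ x → x ≤ y → y ∈ C → x ∈ C

/-- Minkowski functional of a set. -/
noncomputable def minkowski (C : Set (V → ℝ)) (x : V → ℝ) : ℝ :=
  sInf {μ : ℝ | 0 ≤ μ ∧ x ∈ μ • C}

/-- Support function of a set. -/
noncomputable def suppFn (C : Set (V → ℝ)) (y : V → ℝ) : ℝ :=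
  sSup {r : ℝ | ∃ x ∈ C, r = ip x y}

/-- A stable (independent) set of vertices. -/
def IsStableSet (G : SimpleGraph V) (S : Finset V) : Prop :=
  ∀ i ∈ S, ∀ j ∈ S, ¬ G.Adj i j

/-- Weighted stability number `α(G,w)`. -/
noncomputable def alphaW (G : SimpleGraph V) (w : V → ℝ) : ℝ :=
  sSup {r : ℝ | ∃ S : Finset V, IsStableSet G S ∧ r = ∑ i ∈ S, w i}

/-- Stability number `α(G)`. -/
noncomputable def stabilityNumber (G : SimpleGraph V) : ℕ :=
  sSup {n : ℕ | ∃ S : Finset V, IsStableSet G S ∧ S.card = n}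

/-- Weighted fractional chromatic number `χ_f(G,w)`. -/
noncomputable def chiF (G : SimpleGraph V) (w : V → ℝ) : ℝ :=
  sInf {r : ℝ | ∃ y : Finset V → ℝ,
    (∀ S, 0 ≤ y S) ∧ (∀ S, ¬ IsStableSet G S → y S = 0) ∧
    (∀ i, w i ≤ ∑ S : Finset V, (if i ∈ S then y S else 0)) ∧
    r = ∑ S : Finset V, y S}

/-- The stable set polytope `STAB(G)`. -/
def STABset (G : SimpleGraph V) : Set (V → ℝ) :=
  convexHull ℝ {x : V → ℝ | ∃ S : Finset V, IsStableSet G S ∧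
    x = fun i => if i ∈ S then (1 : ℝ) else 0}

/-- The fractional stable set polytope `QSTAB(G)`. -/
def QSTABset (H : SimpleGraph V) : Set (V → ℝ) :=
  {x | 0 ≤ x ∧ ∀ K : Finset V, H.IsClique (↑K : Set V) → ∑ i ∈ K, x i ≤ 1}

/-- The set of (real) eigenvalues of a matrix. -/
def spectrumSet (M : Matrix V V ℝ) : Set ℝ :=
  {t | ∃ x : V → ℝ, x ≠ 0 ∧ M.mulVec x = t • x}

/-- Largest eigenvalue. -/
noncomputable def lambdaMax (M : Matrix V V ℝ) : ℝ := sSup (spectrumSet M)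

/-- Smallest eigenvalue. -/
noncomputable def lambdaMin (M : Matrix V V ℝ) : ℝ := sInf (spectrumSet M)

/-- Positive semidefinite square root (zero on non-PSD matrices). -/
noncomputable def psdSqrt (M : Matrix V V ℝ) : Matrix V V ℝ :=
  letI := Classical.dec M.PosSemidef
  if h : M.PosSemidef then
    (h.1.eigenvectorUnitary : Matrix V V ℝ) * Matrix.diagonal ((↑) ∘ (Real.sqrt ·) ∘ h.1.eigenvalues) *
      (star h.1.eigenvectorUnitary : Matrix V V ℝ) else 0

/-- `Â = A / (-λ_min(A))` for nonzero `A`, and `0̂ = 0`. -/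
noncomputable def hatM (A : Matrix V V ℝ) : Matrix V V ℝ :=
  if A = 0 then 0 else (-(lambdaMin A))⁻¹ • A

/-- `A` is a generalized adjacency matrix of `G`: symmetric, with `A i j = 0`
whenever `i` and `j` are non-adjacent (in particular on the diagonal). -/
def IsGenAdj (G : SimpleGraph V) (A : Matrix V V ℝ) : Prop :=
  A.IsSymm ∧ ∀ i j, ¬ G.Adj i j → A i j = 0

/-- Weighted Hoffman bound `H(A,w) = λ_max(W^{1/2}(I+Â)W^{1/2})`, `W = Diag w`. -/
noncomputable def hoffman (A : Matrix V V ℝ) (w : V → ℝ) : ℝ :=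
  lambdaMax (psdSqrt (Matrix.diagonal w) * (1 + hatM A) * psdSqrt (Matrix.diagonal w))

/-- The feasible region `𝒰_A` of the SDP defining `Υ(A,·)`. -/
def Uset (A : Matrix V V ℝ) : Set (V → ℝ) :=
  {x | 0 ≤ x ∧ ((1 : Matrix V V ℝ) -
    psdSqrt (1 + hatM A) * Matrix.diagonal x * psdSqrt (1 + hatM A)).PosSemidef}

/-- `Υ(A,w) = max{⟨w,x⟩ : x ≥ 0, (I+Â)^{1/2} Diag(x) (I+Â)^{1/2} ⪯ I}`. -/
noncomputable def upsilon (A : Matrix V V ℝ) (w : V → ℝ) : ℝ :=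
  sSup {r : ℝ | ∃ x ∈ Uset A, r = ip w x}

/-- The diagonal of a matrix, as a vector. -/
def diagVec (M : Matrix V V ℝ) : V → ℝ := fun i => M i i

/-- The convex corner `ℋ_A`. -/
def Hset (A : Matrix V V ℝ) : Set (V → ℝ) :=
  {x | 0 ≤ x ∧ ∃ Y : Matrix V V ℝ, Y.PosSemidef ∧ Y.trace ≤ 1 ∧
    ∀ i, x i ≤ diagVec (psdSqrt (1 + hatM A) * Y * psdSqrt (1 + hatM A)) i}

/-- Objective function of Luz's convex quadratic program:
`2⟨w,x⟩ − ⟨x, W^{1/2}(I+Â)W^{1/2} x⟩`. -/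
noncomputable def luzObj (A : Matrix V V ℝ) (w x : V → ℝ) : ℝ :=
  2 * ip w x - ∑ i, x i *
    ((psdSqrt (Matrix.diagonal w) * (1 + hatM A) * psdSqrt (Matrix.diagonal w)).mulVec x) i

/-- Luz's bound `ℓ(A,w)` as a real number (supremum of the CQP objective). -/
noncomputable def luz (A : Matrix V V ℝ) (w : V → ℝ) : ℝ :=
  sSup {r : ℝ | ∃ x : V → ℝ, 0 ≤ x ∧ r = luzObj A w x}

/-- Luz's bound `ℓ(A,w)` with values in `ℝ ∪ {±∞}`. -/
noncomputable def luzE (A : Matrix V V ℝ) (w : V → ℝ) : EReal :=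
  sSup {r : EReal | ∃ x : V → ℝ, 0 ≤ x ∧ r = ((luzObj A w x : ℝ) : EReal)}

/-- The theta body `TH(G)`. -/
def THbody (G : SimpleGraph V) : Set (V → ℝ) :=
  {x | 0 ≤ x ∧ ∃ X : Matrix V V ℝ, X.PosSemidef ∧ (∀ i, X i i = x i) ∧
    (∀ i j, G.Adj i j → X i j = 0) ∧
    (Matrix.fromBlocks (1 : Matrix Unit Unit ℝ) (Matrix.of fun _ j => x j)
      (Matrix.of fun i _ => x i) X).PosSemidef}

/-- Weighted Lovász theta number `θ(G,w)`. -/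
noncomputable def thetaW (G : SimpleGraph V) (w : V → ℝ) : ℝ :=
  sSup {r : ℝ | ∃ x ∈ THbody G, r = ip w x}


section LuzAux

open Matrix

set_option linter.unusedSectionVars false
set_option linter.unusedVariables false

lemma real_dot_self_nonneg (v : V → ℝ) : 0 ≤ v ⬝ᵥ v :=
  Finset.sum_nonneg fun i _ => mul_self_nonneg _

lemma real_dot_self_pos {v : V → ℝ} (hv : v ≠ 0) : 0 < v ⬝ᵥ v :=
  (real_dot_self_nonneg v).lt_of_ne fun h => hv (dotProduct_self_eq_zero.mp h.symm)

lemma quad_decomp [Nonempty V] (A : Matrix V V ℝ) (hH : A.IsHermitian) (v : V → ℝ) :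
    v ⬝ᵥ A *ᵥ v
      = ∑ i, hH.eigenvalues i * (((hH.eigenvectorUnitary : Matrix V V ℝ)ᵀ *ᵥ v) i) ^ 2 ∧
    v ⬝ᵥ v = ∑ i, (((hH.eigenvectorUnitary : Matrix V V ℝ)ᵀ *ᵥ v) i) ^ 2 := by
  set U := (hH.eigenvectorUnitary : Matrix V V ℝ) with hU
  have hst : star U = Uᵀ := by
    rw [star_eq_conjTranspose, conjTranspose_eq_transpose_of_trivial]
  have hUU : U * Uᵀ = 1 := by
    rw [← hst]; exact mem_unitaryGroup_iff.mp hH.eigenvectorUnitary.2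
  set u := Uᵀ *ᵥ v with hu
  constructor
  · conv_lhs => rw [hH.spectral_theorem]
    rw [Unitary.conjStarAlgAut_apply, ← hU, hst, ← mulVec_mulVec, ← mulVec_mulVec, dotProduct_mulVec, ← mulVec_transpose]
    have : Uᵀ *ᵥ v ⬝ᵥ (diagonal (RCLike.ofReal ∘ hH.eigenvalues) *ᵥ (Uᵀ *ᵥ v))
        = ∑ i, hH.eigenvalues i * (u i) ^ 2 := by
      simp [dotProduct, mulVec_diagonal, hu]
      exact Finset.sum_congr rfl fun i _ => by ring
    exact this
  · have : v ⬝ᵥ v = v ⬝ᵥ (U * Uᵀ) *ᵥ v := by rw [hUU, one_mulVec]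
    rw [this, ← mulVec_mulVec, dotProduct_mulVec, ← mulVec_transpose]
    simp [dotProduct, hu, sq]

lemma inf_le_quad [Nonempty V] (A : Matrix V V ℝ) (hH : A.IsHermitian) (v : V → ℝ) :
    (Finset.univ.inf' Finset.univ_nonempty hH.eigenvalues) * (v ⬝ᵥ v) ≤ v ⬝ᵥ A *ᵥ v := by
  obtain ⟨h1, h2⟩ := quad_decomp A hH v
  rw [h1, h2, Finset.mul_sum]
  exact Finset.sum_le_sum fun i _ =>
    mul_le_mul_of_nonneg_right (Finset.inf'_le _ (Finset.mem_univ i)) (sq_nonneg _)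

lemma eigen_mem [Nonempty V] (A : Matrix V V ℝ) (hH : A.IsHermitian) (j : V) :
    hH.eigenvalues j ∈ spectrumSet A := by
  refine ⟨⇑(hH.eigenvectorBasis j), ?_, ?_⟩
  · intro h
    apply hH.eigenvectorBasis.toBasis.ne_zero j
    apply (WithLp.equiv 2 _).injective
    simpa using h
  · exact hH.mulVec_eigenvectorBasis j

lemma lambdaMin_eq [Nonempty V] (A : Matrix V V ℝ) (hH : A.IsHermitian) :
    lambdaMin A = Finset.univ.inf' Finset.univ_nonempty hH.eigenvalues := by
  set m := Finset.univ.inf' Finset.univ_nonempty hH.eigenvalues with hm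
  have hlb : ∀ t ∈ spectrumSet A, m ≤ t := by
    rintro t ⟨x, hx, hAx⟩
    have h := inf_le_quad A hH x
    rw [hAx] at h
    have hpos : 0 < x ⬝ᵥ x := real_dot_self_pos hx
    have : x ⬝ᵥ t • x = t * (x ⬝ᵥ x) := by
      simp [dotProduct, Finset.mul_sum]
      exact Finset.sum_congr rfl fun i _ => by ring
    rw [this] at h
    exact le_of_mul_le_mul_right h hpos
  have hmem : m ∈ spectrumSet A := by
    obtain ⟨j, -, hj⟩ := Finset.exists_mem_eq_inf' Finset.univ_nonempty hH.eigenvalues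
    rw [hm, hj]
    exact eigen_mem A hH j
  exact le_antisymm (csInf_le ⟨m, hlb⟩ hmem) (le_csInf ⟨m, hmem⟩ hlb)

lemma lambdaMin_quad (A : Matrix V V ℝ) (hH : A.IsHermitian) (v : V → ℝ) :
    lambdaMin A * (v ⬝ᵥ v) ≤ v ⬝ᵥ A *ᵥ v := by
  cases isEmpty_or_nonempty V with
  | inl h => simp [dotProduct]
  | inr h =>
    rw [lambdaMin_eq A hH]
    exact inf_le_quad A hH v

lemma star_triv (x : V → ℝ) : star x = x := by
  funext i; simp

lemma isHermitian_of_isSymm {A : Matrix V V ℝ} (h : A.IsSymm) : A.IsHermitian := by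
  rw [IsHermitian, conjTranspose_eq_transpose_of_trivial]; exact h

lemma lambdaMin_neg {A : Matrix V V ℝ} (hsym : A.IsSymm) (hdiag : ∀ i, A i i = 0)
    (hA0 : A ≠ 0) : lambdaMin A < 0 := by
  by_contra hle
  push_neg at hle
  apply hA0
  have hq : ∀ v : V → ℝ, 0 ≤ v ⬝ᵥ A *ᵥ v := fun v =>
    le_trans (mul_nonneg hle (real_dot_self_nonneg v))
      (lambdaMin_quad A (isHermitian_of_isSymm hsym) v)
  ext i j
  by_cases hij : i = j
  · subst hij; simp [hdiag i]
  · have hsymm : A j i = A i j := by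
      have := congrFun (congrFun hsym i) j
      simpa [transpose_apply] using this
    have key : ∀ t : ℝ, 0 ≤ 2 * t * A i j := by
      intro t
      have := hq ((Pi.single i 1 : V → ℝ) + t • (Pi.single j 1 : V → ℝ))
      rw [mulVec_add, mulVec_smul, dotProduct_add, add_dotProduct, add_dotProduct,
        smul_dotProduct, smul_dotProduct, dotProduct_smul, dotProduct_smul] at this
      simp only [mulVec_single, single_dotProduct, mul_one, one_mul, smul_eq_mul,
          MulOpposite.op_one, one_smul, col_apply] at this
      rw [hdiag i, hdiag j] at this
      calc (0:ℝ) ≤ _ := this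
        _ = 2 * t * A i j := by rw [hsymm]; ring
    have h1 := key (-(A i j))
    have h2 : A i j * A i j ≤ 0 := by nlinarith
    have h3 := le_antisymm h2 (mul_self_nonneg _)
    simpa using mul_self_eq_zero.mp h3

lemma one_add_hat_posSemidef {A : Matrix V V ℝ} (hsym : A.IsSymm) (hdiag : ∀ i, A i i = 0) :
    (1 + hatM A).PosSemidef := by
  by_cases hA0 : A = 0
  · simp [hatM, hA0]
    exact PosSemidef.one
  · rw [hatM, if_neg hA0]
    have hH := isHermitian_of_isSymm hsym
    have hneg := lambdaMin_neg hsym hdiag hA0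
    set c := -lambdaMin A with hc
    have hcpos : 0 < c := by simpa [hc] using hneg
    refine PosSemidef.of_dotProduct_mulVec_nonneg ?_ ?_
    · apply IsHermitian.add isHermitian_one
      show (((-lambdaMin A)⁻¹ : ℝ) • A)ᴴ = _
      rw [conjTranspose_smul, hH.eq]
      simp
      rw [hc, inv_neg, neg_smul]
    · intro x
      rw [star_triv, add_mulVec, one_mulVec, dotProduct_add, smul_mulVec,
        dotProduct_smul]
      have hquad := lambdaMin_quad A hH x
      have hx := real_dot_self_nonneg x
      have hmono : c⁻¹ * (lambdaMin A * (x ⬝ᵥ x)) ≤ c⁻¹ * (x ⬝ᵥ A *ᵥ x) :=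
        mul_le_mul_of_nonneg_left hquad (inv_nonneg.mpr hcpos.le)
      have hlm : lambdaMin A = -c := by rw [hc]; ring
      rw [hlm] at hmono
      have hcc : c⁻¹ * (-c * (x ⬝ᵥ x)) = -(x ⬝ᵥ x) := by
        field_simp
      rw [hcc] at hmono
      simp only [smul_eq_mul]
      linarith

lemma psdSqrt_spec {M : Matrix V V ℝ} (h : M.PosSemidef) :
    (psdSqrt M).PosSemidef ∧ psdSqrt M * psdSqrt M = M := by
  rw [psdSqrt, dif_pos h]
  set U : Matrix V V ℝ := (h.1.eigenvectorUnitary : Matrix V V ℝ) with hU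
  set D : Matrix V V ℝ := diagonal ((↑) ∘ (Real.sqrt ·) ∘ h.1.eigenvalues) with hD
  have hUU : star U * U = 1 := Unitary.coe_star_mul_self h.1.eigenvectorUnitary
  constructor
  · have hDp : D.PosSemidef := PosSemidef.diagonal (fun i => Real.sqrt_nonneg _)
    have := hDp.mul_mul_conjTranspose_same U
    simpa [star_eq_conjTranspose] using this
  · conv_rhs => rw [h.1.spectral_theorem, Unitary.conjStarAlgAut_apply, ← hU]
    have hDD : D * D = diagonal (RCLike.ofReal ∘ h.1.eigenvalues) := by
      rw [hD, diagonal_mul_diagonal]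
      congr 1
      funext i
      simp [Real.mul_self_sqrt (h.eigenvalues_nonneg i)]
    calc U * D * star U * (U * D * star U) = U * (D * (star U * U) * D) * star U := by
          simp only [mul_assoc]
      _ = _ := by rw [hUU, mul_one, hDD]

open scoped MatrixOrder in
lemma psdSqrt_of_posSemidef {M : Matrix V V ℝ} (h : M.PosSemidef) :
    psdSqrt M = CFC.sqrt M :=
  (CFC.sqrt_unique (psdSqrt_spec h).2 (nonneg_iff_posSemidef.mpr (psdSqrt_spec h).1)).symm

lemma psdSqrt_posSemidef {M : Matrix V V ℝ} (h : M.PosSemidef) :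
    (psdSqrt M).PosSemidef := by
  exact (psdSqrt_spec h).1

lemma psdSqrt_mul_self {M : Matrix V V ℝ} (h : M.PosSemidef) :
    psdSqrt M * psdSqrt M = M := by
  exact (psdSqrt_spec h).2

lemma psdSqrt_diagonal {w : V → ℝ} (hw : 0 ≤ w) :
    psdSqrt (diagonal w) = diagonal (fun i => Real.sqrt (w i)) := by
  have hR : (diagonal (fun i => Real.sqrt (w i))).PosSemidef :=
    PosSemidef.diagonal fun i => Real.sqrt_nonneg _
  have hsq : (diagonal (fun i => Real.sqrt (w i))) ^ 2 = diagonal w := by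
    rw [sq, diagonal_mul_diagonal]
    simp only [diagonal_eq_diagonal_iff]
    exact fun i => Real.mul_self_sqrt (hw i)
  rw [psdSqrt_of_posSemidef (PosSemidef.diagonal hw)]
  open scoped MatrixOrder in
  exact CFC.sqrt_unique (by rw [← sq]; exact hsq) (nonneg_iff_posSemidef.mpr hR)

lemma symm_dot_mulVec {S : Matrix V V ℝ} (hS : S.IsHermitian) (a b : V → ℝ) :
    a ⬝ᵥ S *ᵥ b = (S *ᵥ a) ⬝ᵥ b := by
  rw [dotProduct_mulVec, ← mulVec_transpose]
  congr 1
  rw [← conjTranspose_eq_transpose_of_trivial, hS.eq]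

lemma hermitian_apply_symm {S : Matrix V V ℝ} (hS : S.IsHermitian) (i j : V) :
    S i j = S j i := by
  conv_lhs => rw [← hS.eq]
  simp [conjTranspose_apply]

lemma quad_le_ip {Q : Matrix V V ℝ} (hQ : Q.PosSemidef) {w x : V → ℝ} (hw : 0 ≤ w)
    (hx : 0 ≤ x)
    (hU : ((1 : Matrix V V ℝ) - psdSqrt Q * diagonal x * psdSqrt Q).PosSemidef) :
    x ⬝ᵥ (psdSqrt (diagonal w) * Q * psdSqrt (diagonal w)) *ᵥ x ≤ ∑ i, w i * x i := by
  have hS := psdSqrt_posSemidef hQ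
  have hSS := psdSqrt_mul_self hQ
  set S := psdSqrt Q with hSdef
  set z : V → ℝ := fun i => Real.sqrt (w i) * x i with hz
  set q : V → ℝ := Q *ᵥ z with hq
  set s : V → ℝ := S *ᵥ z with hs
  have hdiagH : (diagonal (fun i => Real.sqrt (w i))).IsHermitian := by
    rw [IsHermitian, conjTranspose_eq_transpose_of_trivial, diagonal_transpose]
  have step1 : x ⬝ᵥ (psdSqrt (diagonal w) * Q * psdSqrt (diagonal w)) *ᵥ x = z ⬝ᵥ q := by
    rw [psdSqrt_diagonal hw, ← mulVec_mulVec, ← mulVec_mulVec,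
      symm_dot_mulVec hdiagH]
    have hdx : diagonal (fun i => Real.sqrt (w i)) *ᵥ x = z := by
      funext i; simp [mulVec_diagonal, hz]
    rw [hdx, hq]
  have step2 : z ⬝ᵥ q = s ⬝ᵥ s := by
    rw [hq, ← hSS, ← mulVec_mulVec, symm_dot_mulVec hS.1, ← hs]
  have step3 : ∑ i, x i * (q i) ^ 2 ≤ s ⬝ᵥ s := by
    have h2 := hU.dotProduct_mulVec_nonneg s
    rw [star_triv, sub_mulVec, one_mulVec, dotProduct_sub] at h2
    have hform : s ⬝ᵥ (S * diagonal x * S) *ᵥ s = ∑ i, x i * (q i) ^ 2 := by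
      rw [← mulVec_mulVec, ← mulVec_mulVec, symm_dot_mulVec hS.1]
      have hq2 : S *ᵥ s = q := by rw [hs, mulVec_mulVec, hSS, hq]
      rw [hq2]
      simp only [dotProduct, mulVec_diagonal]
      exact Finset.sum_congr rfl fun i _ => by ring
    rw [hform] at h2
    linarith
  rw [step1, step2]
  set c : ℝ := s ⬝ᵥ s with hc
  have hc0 : 0 ≤ c := Finset.sum_nonneg fun i _ => mul_self_nonneg _
  have hW0 : 0 ≤ ∑ i, w i * x i := Finset.sum_nonneg fun i _ => mul_nonneg (hw i) (hx i)
  have hzq : c = ∑ i, (Real.sqrt (w i) * Real.sqrt (x i)) * (Real.sqrt (x i) * q i) := by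
    rw [← step2]
    refine Finset.sum_congr rfl fun i _ => ?_
    simp only [hz]
    rw [show Real.sqrt (w i) * Real.sqrt (x i) * (Real.sqrt (x i) * q i)
        = Real.sqrt (w i) * (Real.sqrt (x i) * Real.sqrt (x i)) * q i from by ring,
      Real.mul_self_sqrt (hx i)]
  have CS := Finset.sum_mul_sq_le_sq_mul_sq Finset.univ
    (fun i => Real.sqrt (w i) * Real.sqrt (x i)) (fun i => Real.sqrt (x i) * q i)
  have hf : ∑ i, (Real.sqrt (w i) * Real.sqrt (x i)) ^ 2 = ∑ i, w i * x i :=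
    Finset.sum_congr rfl fun i _ => by
      rw [mul_pow, Real.sq_sqrt (hw i), Real.sq_sqrt (hx i)]
  have hg : ∑ i, (Real.sqrt (x i) * q i) ^ 2 = ∑ i, x i * (q i) ^ 2 :=
    Finset.sum_congr rfl fun i _ => by
      rw [mul_pow, Real.sq_sqrt (hx i)]
  rw [← hzq, hf, hg] at CS
  have hcc : c ^ 2 ≤ (∑ i, w i * x i) * c :=
    le_trans CS (mul_le_mul_of_nonneg_left step3 hW0)
  rcases hc0.lt_or_eq with hpos | hzero
  · nlinarith
  · rw [← hzero]; exact hW0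

lemma vecMulVec_posSemidef (y : V → ℝ) : (vecMulVec y y).PosSemidef := by
  refine PosSemidef.of_dotProduct_mulVec_nonneg ?_ ?_
  · rw [IsHermitian, conjTranspose_eq_transpose_of_trivial]
    ext i j
    simp [vecMulVec_apply, transpose_apply, mul_comm]
  · intro x
    rw [star_triv]
    have hmv : vecMulVec y y *ᵥ x = fun i => y i * (y ⬝ᵥ x) := by
      funext i
      simp [mulVec, vecMulVec_apply, dotProduct, Finset.mul_sum, mul_assoc]
    rw [hmv]
    have heq : x ⬝ᵥ (fun i => y i * (y ⬝ᵥ x)) = (x ⬝ᵥ y) * (y ⬝ᵥ x) := by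
      simp only [dotProduct]
      rw [Finset.sum_mul]
      exact Finset.sum_congr rfl fun i _ => by ring
    rw [heq, dotProduct_comm]
    exact mul_self_nonneg _

lemma diag_sandwich (S : Matrix V V ℝ) (hS : S.IsHermitian) (y : V → ℝ) (i : V) :
    (S * vecMulVec y y * S) i i = ((S *ᵥ y) i) ^ 2 := by
  have h1 : ∀ j, (S * vecMulVec y y) i j = (S *ᵥ y) i * y j := by
    intro j
    simp only [mul_apply, vecMulVec_apply, mulVec, dotProduct]
    rw [Finset.sum_mul]
    exact Finset.sum_congr rfl fun k _ => by ring
  rw [mul_apply]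
  calc ∑ j, (S * vecMulVec y y) i j * S j i
      = ∑ j, (S *ᵥ y) i * (S i j * y j) := by
        refine Finset.sum_congr rfl fun j _ => ?_
        rw [h1 j, hermitian_apply_symm hS j i]
        ring
    _ = (S *ᵥ y) i * ∑ j, S i j * y j := by rw [← Finset.mul_sum]
    _ = ((S *ᵥ y) i) ^ 2 := by
        simp only [mulVec, dotProduct]
        ring


/-- every feasible point of the dual Luz CQP gives a rank-one
feasible point of the dual SDP for `Υ(A,w)`; consequently `Υ(A,w) ≤ ℓ(A,w)`. -/
theorem luz_dual_feasible (G : SimpleGraph V) (A : Matrix V V ℝ)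
    (hA : IsGenAdj G A) (w : V → ℝ) (hw : 0 ≤ w) :
    (∀ y : V → ℝ,
      (∀ i, Real.sqrt (w i) ≤
        ((Matrix.diagonal (fun j => if w j = 0 then (0 : ℝ) else 1) *
          psdSqrt (1 + hatM A)).mulVec y) i) →
      (Matrix.vecMulVec y y).PosSemidef ∧
      (∀ i, w i ≤ diagVec (psdSqrt (1 + hatM A) * Matrix.vecMulVec y y *
        psdSqrt (1 + hatM A)) i) ∧
      (Matrix.vecMulVec y y).trace = ∑ i, y i ^ 2) ∧
    (upsilon A w : EReal) ≤ luzE A w := by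
  have hdiag : ∀ i, A i i = 0 := fun i => hA.2 i i (G.loopless.irrefl i)
  have hQ : ((1 : Matrix V V ℝ) + hatM A).PosSemidef := one_add_hat_posSemidef hA.1 hdiag
  have hS := psdSqrt_posSemidef hQ
  constructor
  · intro y hy
    refine ⟨vecMulVec_posSemidef y, ?_, ?_⟩
    · intro i
      have hd : diagVec (psdSqrt (1 + hatM A) * Matrix.vecMulVec y y *
          psdSqrt (1 + hatM A)) i = ((psdSqrt (1 + hatM A) *ᵥ y) i) ^ 2 :=
        diag_sandwich _ hS.1 y i
      rw [hd]
      have hyi := hy i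
      rw [← Matrix.mulVec_mulVec] at hyi
      by_cases hwi : w i = 0
      · rw [hwi]; exact sq_nonneg _
      · have hle : Real.sqrt (w i) ≤ (psdSqrt (1 + hatM A) *ᵥ y) i := by
          simpa [Matrix.mulVec_diagonal, hwi] using hyi
        calc w i = Real.sqrt (w i) ^ 2 := (Real.sq_sqrt (hw i)).symm
          _ ≤ _ := pow_le_pow_left₀ (Real.sqrt_nonneg _) hle 2
    · simp [Matrix.trace, Matrix.diag, Matrix.vecMulVec_apply, pow_two]
  · have hobj : ∀ x ∈ Uset A, ip w x ≤ luzObj A w x := by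
      rintro x ⟨hx0, hxP⟩
      have hkey := quad_le_ip hQ hw hx0 hxP
      have hip : ip w x = ∑ i, w i * x i := rfl
      have hsum : ∑ i, x i * ((psdSqrt (Matrix.diagonal w) * (1 + hatM A) *
          psdSqrt (Matrix.diagonal w)).mulVec x) i
          = x ⬝ᵥ (psdSqrt (Matrix.diagonal w) * (1 + hatM A) *
            psdSqrt (Matrix.diagonal w)) *ᵥ x := rfl
      rw [luzObj, hsum, hip]
      linarith
    by_cases htop : luzE A w = ⊤
    · rw [htop]; exact le_top
    · have h0mem : ((0:ℝ) : EReal) ∈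
          {r : EReal | ∃ x : V → ℝ, 0 ≤ x ∧ r = ((luzObj A w x : ℝ) : EReal)} := by
        refine ⟨0, le_refl 0, ?_⟩
        norm_cast
        simp [luzObj, ip]
      have h0le : ((0:ℝ) : EReal) ≤ luzE A w := le_sSup h0mem
      have hbot : luzE A w ≠ ⊥ := fun h => by rw [h] at h0le; exact absurd h0le (by simp)
      set L := (luzE A w).toReal with hL
      have hLE : ((L : ℝ) : EReal) = luzE A w := EReal.coe_toReal htop hbot
      have hub : ∀ x : V → ℝ, 0 ≤ x → luzObj A w x ≤ L := by
        intro x hx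
        have hle : ((luzObj A w x : ℝ) : EReal) ≤ luzE A w := le_sSup ⟨x, hx, rfl⟩
        rw [← hLE] at hle
        exact_mod_cast hle
      have hups : upsilon A w ≤ L := by
        apply Real.sSup_le
        · rintro r ⟨x, hx, rfl⟩
          exact le_trans (hobj x hx) (hub x hx.1)
        · have h1 := hub 0 (le_refl 0)
          have h00 : luzObj A w 0 = 0 := by simp [luzObj, ip]
          linarith
      calc (upsilon A w : EReal) ≤ ((L : ℝ) : EReal) := by exact_mod_cast hups
        _ = luzE A w := hLE

end LuzAux
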